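/- Let α be an injective orientation-preserving partial transformation of Ω_n with image contained in Y ⊆ Ω_n (Y nonempty). Then α is a regular element of POPI_n(Y) if and only if Dom(α) ⊆ Y. -/

import Mathlib

open scoped Classical

namespace POPIpaper

/-- Partial transformations of `Ω_n = {1,…,n}`, modelled on `Fin n`. -/
abbrev PT (n : ℕ) := Fin n → Option (Fin n)

/-- Composition of partial transformations (apply `α` first, then `β`). -/
def comp {n : ℕ} (α β : PT n) : PT n := fun x => (α x).bind β

/-- Domain of a partial transformation. -/
noncomputable def dom {n : ℕ} (α : PT n) : Finset (Fin n) :=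
  Finset.univ.filter (fun x => (α x).isSome)

/-- Image of a partial transformation. -/
noncomputable def im {n : ℕ} (α : PT n) : Finset (Fin n) :=
  Finset.univ.filter (fun y => ∃ x, α x = some y)

/-- rank(α) = |Im(α)|. -/
noncomputable def rank {n : ℕ} (α : PT n) : ℕ := (im α).card

/-- Injectivity of a partial transformation. -/
def Inj {n : ℕ} (α : PT n) : Prop :=
  ∀ x y z : Fin n, α x = some z → α y = some z → x = y

/-- Orientation-preserving: the sequence of images, taken along the increasing
enumeration of the domain, is cyclic, i.e. some rotation of it is sorted. -/
def OP {n : ℕ} (α : PT n) : Prop :=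
  ∃ k : ℕ, (((List.finRange n).filterMap α).rotate k).Pairwise (· ≤ ·)

/-- The semigroup `POPI_n(Y)` as a set of partial transformations:
injective, orientation-preserving, with image contained in `Y`. -/
def POPI (n : ℕ) (Y : Finset (Fin n)) : Set (PT n) :=
  {α | Inj α ∧ OP α ∧ ∀ x y : Fin n, α x = some y → y ∈ Y}

/-- Regularity of `α` as an element of the subsemigroup `S`. -/
def IsRegularIn {n : ℕ} (S : Set (PT n)) (α : PT n) : Prop :=
  ∃ β ∈ S, comp (comp α β) α = α

/-- The partial identity on a subset `A`. -/
def idp {n : ℕ} (A : Finset (Fin n)) : PT n :=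
  fun x => if x ∈ A then some x else none

/-- Fixed points of a partial transformation. -/
noncomputable def fix {n : ℕ} (α : PT n) : Finset (Fin n) :=
  Finset.univ.filter (fun x => α x = some x)

/-- Green's relation ℒ on the set `S`: `S¹α = S¹β`. -/
def LRel {n : ℕ} (S : Set (PT n)) (α β : PT n) : Prop :=
  (α = β ∨ ∃ γ ∈ S, comp γ β = α) ∧ (β = α ∨ ∃ γ ∈ S, comp γ α = β)

/-- Green's relation ℛ on the set `S`: `αS¹ = βS¹`. -/
def RRel {n : ℕ} (S : Set (PT n)) (α β : PT n) : Prop :=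
  (α = β ∨ ∃ γ ∈ S, comp β γ = α) ∧ (β = α ∨ ∃ γ ∈ S, comp α γ = β)

/-- Green's relation ℋ = ℒ ∩ ℛ. -/
def HRel {n : ℕ} (S : Set (PT n)) (α β : PT n) : Prop :=
  LRel S α β ∧ RRel S α β

/-- Green's relation 𝒟 = ℒ ∘ ℛ. -/
def DRel {n : ℕ} (S : Set (PT n)) (α β : PT n) : Prop :=
  ∃ γ ∈ S, LRel S α γ ∧ RRel S γ β

/-- `Φ` is a semigroup isomorphism from the subsemigroup `S` onto `T`. -/
def IsIso {n : ℕ} (S T : Set (PT n)) (Φ : PT n → PT n) : Prop :=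
  Set.BijOn Φ S T ∧ ∀ a ∈ S, ∀ b ∈ S, Φ (comp a b) = comp (Φ a) (Φ b)

/-- The product `β * l₁ * ⋯ * l_k` of a nonempty list of partial transformations. -/
def prodList {n : ℕ} (β : PT n) (l : List (PT n)) : PT n := l.foldl comp β

/-!
If `αβα = α` with `α` injective, every `x ∈ Dom α` equals `(xα)β ∈ Im β ⊆ Y`. Conversely, when
`Dom α ⊆ Y` the partial inverse `α⁻¹` lies in `POPI_n(Y)` and satisfies `αα⁻¹α = α`. It is
orientation-preserving because its image sequence is `α⁻¹` applied to the increasing enumeration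
of `Im α`, which is a rotation of `α`'s image sequence; so it is a rotation of `α⁻¹` applied to
`α`'s image sequence, i.e. of the increasing enumeration of `Dom α`.
-/

section

variable {n : ℕ}

protected theorem _root_.List.IsRotated.filterMap {α β : Type*} {l₁ l₂ : List α} (h : l₁ ~r l₂)
    (f : α → Option β) : l₁.filterMap f ~r l₂.filterMap f := by
  obtain ⟨k, hk, rfl⟩ := List.isRotated_iff_mod.1 h
  conv_lhs => rw [← List.take_append_drop k l₁]
  rw [List.rotate_eq_drop_append_take hk, List.filterMap_append, List.filterMap_append]
  exact List.isRotated_append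

theorem filter_mem_finRange_eq {l : List (Fin n)} (hl : l.Pairwise (· < ·)) :
    (List.finRange n).filter (· ∈ l) = l :=
  ((List.pairwise_lt_finRange n).filter _).eq_of_mem_iff hl (by simp)

theorem filterMap_finRange_eq {β : Type*} {f : Fin n → Option β} {l : List (Fin n)}
    (hl : l.Pairwise (· < ·)) (hf : ∀ y b, f y = some b → y ∈ l) :
    (List.finRange n).filterMap f = l.filterMap f := by
  rw [← filter_mem_finRange_eq hl, List.filterMap_filter]
  congr 1
  funext y
  by_cases hy : y ∈ l
  · simp [hy]
  · rw [if_neg (by simpa using hy), Option.eq_none_iff_forall_ne_some]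
    exact fun b hb => hy (hf y b hb)

theorem mem_dom {α : PT n} {x : Fin n} : x ∈ dom α ↔ ∃ y, α x = some y := by
  simp [dom, Option.isSome_iff_exists]

theorem mem_im {α : PT n} {y : Fin n} : y ∈ im α ↔ ∃ x, α x = some y := by
  simp [im]

theorem filterMap_idp (A : Finset (Fin n)) (l : List (Fin n)) :
    l.filterMap (idp A) = l.filter (· ∈ A) := by
  induction l with
  | nil => rfl
  | cons a l ih => by_cases ha : a ∈ A <;> simp [idp, ha, ih]

theorem comp_idp_dom (α : PT n) : comp (idp (dom α)) α = α := by
  funext x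
  cases hx : α x <;> simp [comp, idp, mem_dom, hx]

theorem dom_subset_im_of_comp_comp_eq {α β : PT n} (hα : Inj α) (h : comp (comp α β) α = α) :
    dom α ⊆ im β := by
  intro x hx
  obtain ⟨y, hy⟩ := mem_dom.1 hx
  have hx' := congrFun h x
  simp only [comp, hy, Option.bind_some] at hx'
  cases hz : β y with
  | none => simp [hz] at hx'
  | some z =>
    rw [hz, Option.bind_some] at hx'
    exact mem_im.2 ⟨y, hα z x y hx' hy ▸ hz⟩

noncomputable def pinv (α : PT n) : PT n :=
  fun y => if h : ∃ x, α x = some y then some h.choose else none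

theorem apply_eq_of_pinv_eq_some {α : PT n} {x y : Fin n} (h : pinv α y = some x) :
    α x = some y := by
  unfold pinv at h
  split_ifs at h with hy
  exact Option.some_inj.1 h ▸ hy.choose_spec

theorem pinv_eq_some {α : PT n} (hα : Inj α) {x y : Fin n} (h : α x = some y) :
    pinv α y = some x := by
  have hy : ∃ x, α x = some y := ⟨x, h⟩
  rw [pinv, dif_pos hy, hα _ _ _ hy.choose_spec h]

theorem inj_pinv (α : PT n) : Inj (pinv α) := fun _ _ _ h₁ h₂ =>
  Option.some_inj.1 ((apply_eq_of_pinv_eq_some h₁).symm.trans (apply_eq_of_pinv_eq_some h₂))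

theorem comp_pinv {α : PT n} (hα : Inj α) : comp α (pinv α) = idp (dom α) := by
  funext x
  cases hx : α x with
  | none => simp [comp, idp, mem_dom, hx]
  | some y => simp [comp, idp, mem_dom, hx, pinv_eq_some hα hx]

theorem comp_comp_pinv {α : PT n} (hα : Inj α) : comp (comp α (pinv α)) α = α := by
  rw [comp_pinv hα, comp_idp_dom]

theorem op_pinv {α : PT n} (hα : Inj α) (hop : OP α) : OP (pinv α) := by
  obtain ⟨k, hk⟩ := hop
  set L := (List.finRange n).filterMap α
  have hnodup : L.Nodup := (List.nodup_finRange n).filterMap fun x x' _ h h' => hα x x' _ h h'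
  have hsorted : (L.rotate k).Pairwise (· < ·) :=
    (hk.sortedLE.sortedLT_of_nodup (List.nodup_rotate.2 hnodup)).pairwise
  have hE : (List.finRange n).filterMap (pinv α) = (L.rotate k).filterMap (pinv α) :=
    filterMap_finRange_eq hsorted fun y x hx => by
      simpa [L] using ⟨x, apply_eq_of_pinv_eq_some hx⟩
  have hD : L.filterMap (pinv α) = (List.finRange n).filter (· ∈ dom α) := by
    rw [List.filterMap_filterMap, ← filterMap_idp, ← comp_pinv hα]
    rfl
  obtain ⟨k', hk'⟩ := hE ▸ (List.IsRotated.forall L k).filterMap (pinv α)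
  exact ⟨k', hk' ▸ hD ▸ (List.pairwise_le_finRange n).filter _⟩

end

theorem regular_iff_dom_subset_general {n : ℕ} (Y : Finset (Fin n))
    (α : PT n) (hα : α ∈ POPI n Y) :
    IsRegularIn (POPI n Y) α ↔ dom α ⊆ Y := by
  obtain ⟨hinj, hop, -⟩ := hα
  constructor
  · rintro ⟨β, ⟨-, -, hβY⟩, hβ⟩ x hx
    obtain ⟨y, hy⟩ := mem_im.1 (dom_subset_im_of_comp_comp_eq hinj hβ hx)
    exact hβY y x hy
  · intro hdom
    refine ⟨pinv α, ⟨inj_pinv α, op_pinv hinj hop, fun y x h => hdom ?_⟩, comp_comp_pinv hinj⟩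
    exact mem_dom.2 ⟨y, apply_eq_of_pinv_eq_some h⟩

/-- `α ∈ POPI_n(Y)` is regular iff `Dom(α) ⊆ Y`. -/
theorem regular_iff_dom_subset {n : ℕ} (Y : Finset (Fin n)) (hY : Y.Nonempty)
    (α : PT n) (hα : α ∈ POPI n Y) :
    IsRegularIn (POPI n Y) α ↔ dom α ⊆ Y :=
  regular_iff_dom_subset_general Y α hα

end POPIpaper
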